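/- arXiv:1409.7930 — 5 statements merged into one kernel-verified Lean document; each statement's English description precedes it below -/
import Mathlib

section
/- Let T and s be positive natural numbers with gcd(s, T) = 1, let a be any natural number, and let o : ℕ → ℝ be T-periodic with o(n) ∈ {0, 1} for all n and with Σ_{t=0}^{T−1} o(t) > 0. Then the ratios (Σ_{n=0}^{N−1} o(a + n·s)·o(a + n·s + 1)) / (Σ_{n=0}^{N−1} o(a + n·s)) converge, as N → ∞, to (Σ_{t=0}^{T−1} o(t)·o(t+1)) / (Σ_{t=0}^{T−1} o(t)). In particular the limit does not depend on a or on s. -/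
/-!
The folded sequences `n ↦ o (a + n * s) * o (a + n * s + 1)` and `n ↦ o (a + n * s)` are again
`T`-periodic, and the Cesàro mean of a `T`-periodic sequence converges to its mean over one
period. As `s` is coprime to `T`, the progression `a + n * s`, `n < T`, hits every residue
modulo `T` exactly once, so the period sums of the folded sequences equal the unfolded ones.
-/

open Filter Finset Function Topology

namespace Function.Periodic

variable {T : ℕ}

theorem sum_range_add_period {M : Type*} [AddCommMonoid M] {f : ℕ → M} (hf : Periodic f T)
    (N : ℕ) : ∑ n ∈ range (N + T), f n = ∑ n ∈ range N, f n + ∑ n ∈ range T, f n := by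
  rw [add_comm N, sum_range_add, add_comm]
  congr 1
  exact sum_congr rfl fun n _ => by rw [add_comm, hf n]

theorem comp_add_mul {α : Type*} {f : ℕ → α} (hf : Periodic f T) (a s : ℕ) :
    Periodic (fun n => f (a + n * s)) T := fun n => by
  change f _ = f _
  rw [show a + (n + T) * s = a + n * s + s * T by ring]
  simpa using hf.nat_mul s (a + n * s)

-- Since `s` is invertible modulo `T`, `n ↦ (a + n * s) % T` is a permutation of `range T`.
theorem sum_range_comp_add_mul {M : Type*} [AddCommMonoid M] {f : ℕ → M} (hf : Periodic f T)
    {s : ℕ} (hs : s.Coprime T) (a : ℕ) :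
    ∑ n ∈ range T, f (a + n * s) = ∑ n ∈ range T, f n := by
  rcases T.eq_zero_or_pos with rfl | hT
  · simp
  have hmaps : ∀ n ∈ range T, (a + n * s) % T ∈ range T := fun _ _ =>
    mem_range.2 (Nat.mod_lt _ hT)
  have hinj : Set.InjOn (fun n => (a + n * s) % T) (range T) := by
    intro n hn m hm hnm
    refine Nat.ModEq.eq_of_lt_of_lt ?_ (mem_range.1 hn) (mem_range.1 hm)
    exact (Nat.ModEq.add_left_cancel' a hnm).cancel_right_of_coprime (Nat.coprime_comm.1 hs)
  calc ∑ n ∈ range T, f (a + n * s) = ∑ n ∈ range T, f ((a + n * s) % T) :=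
        sum_congr rfl fun n _ => (hf.map_mod_nat _).symm
    _ = ∑ n ∈ range T, f n :=
        sum_nbij _ hmaps hinj (surjOn_of_injOn_of_card_le _ hmaps hinj le_rfl) fun _ _ => rfl

theorem tendsto_sum_range_div_natCast {f : ℕ → ℝ} (hf : Periodic f T) (hT : 0 < T) :
    Tendsto (fun N : ℕ => (∑ n ∈ range N, f n) / N) atTop (𝓝 ((∑ n ∈ range T, f n) / T)) := by
  set c := (∑ n ∈ range T, f n) / T
  -- The discrepancy `D` is `T`-periodic, hence bounded, so `D N / N → 0`.
  set D : ℕ → ℝ := fun N => ∑ n ∈ range N, f n - N * c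
  have hD : Periodic D T := fun N => by
    simp only [D, hf.sum_range_add_period, c]
    push_cast
    field_simp
    ring
  set B := ∑ k ∈ range T, |D k|
  have hDB : ∀ N, |D N| ≤ B := fun N => by
    rw [← hD.map_mod_nat]
    exact single_le_sum (fun k _ => abs_nonneg (D k)) (mem_range.2 (Nat.mod_lt N hT))
  have hD0 : Tendsto (fun N : ℕ => D N / N) atTop (𝓝 0) := by
    refine squeeze_zero_norm (fun N => ?_) (tendsto_const_div_atTop_nhds_zero_nat B)
    rw [Real.norm_eq_abs, abs_div, Nat.abs_cast]
    exact div_le_div_of_nonneg_right (hDB N) N.cast_nonneg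
  refine (by simpa using hD0.const_add c : Tendsto _ _ (𝓝 c)).congr' ?_
  filter_upwards [eventually_ne_atTop 0] with N hN
  simp only [D]
  field_simp
  ring

theorem tendsto_sum_range_div_sum_range {f g : ℕ → ℝ} (hf : Periodic f T) (hg : Periodic g T)
    (hT : 0 < T) (hg0 : ∑ n ∈ range T, g n ≠ 0) :
    Tendsto (fun N => (∑ n ∈ range N, f n) / ∑ n ∈ range N, g n) atTop
      (𝓝 ((∑ n ∈ range T, f n) / ∑ n ∈ range T, g n)) := by
  have hT' : (T : ℝ) ≠ 0 := by exact_mod_cast hT.ne'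
  have := (hf.tendsto_sum_range_div_natCast hT).div (hg.tendsto_sum_range_div_natCast hT)
    (div_ne_zero hg0 hT')
  rw [div_div_div_cancel_right₀ hT'] at this
  refine this.congr' ?_
  filter_upwards [eventually_ne_atTop 0] with N hN
  exact div_div_div_cancel_right₀ (Nat.cast_ne_zero.2 hN) _ _

end Function.Periodic

theorem stmt3_general (T s : ℕ) (hT : 0 < T) (hgcd : Nat.gcd s T = 1) (a : ℕ)
    (o : ℕ → ℝ) (hper : ∀ n, o (n + T) = o n)
    (hpos : 0 < ∑ t ∈ Finset.range T, o t) :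
    Filter.Tendsto
      (fun N : ℕ =>
        (∑ n ∈ Finset.range N, o (a + n * s) * o (a + n * s + 1)) /
          (∑ n ∈ Finset.range N, o (a + n * s)))
      Filter.atTop
      (nhds ((∑ t ∈ Finset.range T, o t * o (t + 1)) / (∑ t ∈ Finset.range T, o t))) := by
  have ho : Periodic o T := hper
  have ho' : Periodic (fun t => o t * o (t + 1)) T := ho.mul (ho.add_const 1)
  have := (ho'.comp_add_mul a s).tendsto_sum_range_div_sum_range (ho.comp_add_mul a s) hT
    (by rw [ho.sum_range_comp_add_mul hgcd]; exact hpos.ne')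
  rwa [ho.sum_range_comp_add_mul hgcd, ho'.sum_range_comp_add_mul hgcd] at this

/-- For `gcd(s, T) = 1` and a binary `T`-periodic observation stream `o` with positive
full-period sum, the empirical conditional probabilities obtained by folding at step `s`
from offset `a` converge to the full-period conditional frequency;
in particular the limit does not depend on `a` or `s`. -/
theorem stmt3 (T s : ℕ) (hT : 0 < T) (hs : 0 < s) (hgcd : Nat.gcd s T = 1) (a : ℕ)
    (o : ℕ → ℝ) (hper : ∀ n, o (n + T) = o n) (hbin : ∀ n, o n = 0 ∨ o n = 1)
    (hpos : 0 < ∑ t ∈ Finset.range T, o t) :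
    Filter.Tendsto
      (fun N : ℕ =>
        (∑ n ∈ Finset.range N, o (a + n * s) * o (a + n * s + 1)) /
          (∑ n ∈ Finset.range N, o (a + n * s)))
      Filter.atTop
      (nhds ((∑ t ∈ Finset.range T, o t * o (t + 1)) / (∑ t ∈ Finset.range T, o t))) :=
  stmt3_general T s hT hgcd a o hper hpos
end

section
/- Let T be an even positive natural number, s an even positive natural number with gcd(s, T) = 2, and a any natural number. Then for every natural number N and every residue r < T: the number of indices n with n < N·(T/2) such that (a + n·s) % T = r equals N if r % 2 = a % 2, and equals 0 otherwise. -/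
/-!
Write `g = gcd T s`. Cancelling `s` in a congruence modulo `T` leaves a congruence modulo `T / g`,
so the first `T / g` terms of `a + n s` are pairwise incongruent modulo `T`. They all lie in the
`T / g` residues congruent to `a` modulo `g`, so every such residue is hit. Hence the indices `n`
with `a + n s ≡ r [MOD T]` form a single class modulo `T / g` when `r ≡ a [MOD g]`, and there are
none otherwise.
-/

open Finset

namespace Nat

variable {T s a r : ℕ}

theorem card_filter_range_modEq_of_dvd {m n : ℕ} (hm : 0 < m) (hmn : m ∣ n) (v : ℕ) :
    #{x ∈ range n | x ≡ v [MOD m]} = n / m := by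
  rw [← count_eq_card_filter_range, count_modEq_card _ hm, mod_eq_zero_of_dvd hmn]
  simp

theorem mul_right_modEq_iff_modEq_div_gcd (hT : 0 < T) {m n : ℕ} :
    m * s ≡ n * s [MOD T] ↔ m ≡ n [MOD T / gcd T s] := by
  refine ⟨ModEq.cancel_right_div_gcd hT, fun h => (h.mul_right' s).of_dvd ?_⟩
  calc T = T / gcd T s * gcd T s := (Nat.div_mul_cancel (gcd_dvd_left T s)).symm
    _ ∣ T / gcd T s * s := mul_dvd_mul_left _ (gcd_dvd_right T s)

theorem add_mul_modEq_iff_modEq_div_gcd (hT : 0 < T) {n₀ n : ℕ}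
    (h₀ : a + n₀ * s ≡ r [MOD T]) : a + n * s ≡ r [MOD T] ↔ n ≡ n₀ [MOD T / gcd T s] := by
  rw [← mul_right_modEq_iff_modEq_div_gcd hT]
  exact ⟨fun h => ModEq.add_left_cancel' a (h.trans h₀.symm), fun h => (h.add_left a).trans h₀⟩

theorem modEq_gcd_of_add_mul_modEq {n : ℕ} (h : a + n * s ≡ r [MOD T]) :
    a ≡ r [MOD gcd T s] := by
  have hs : n * s ≡ 0 [MOD gcd T s] :=
    modEq_zero_iff_dvd.2 (dvd_mul_of_dvd_right (gcd_dvd_right T s) n)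
  exact (hs.add_left a).symm.trans (h.of_dvd (gcd_dvd_left T s))

theorem exists_add_mul_modEq_of_modEq_gcd (hT : 0 < T) (h : a ≡ r [MOD gcd T s]) :
    ∃ n, a + n * s ≡ r [MOD T] := by
  set f : ℕ → ℕ := fun n => (a + n * s) % T
  set P : Finset ℕ := {x ∈ range T | x ≡ a [MOD gcd T s]}
  have hinj : Set.InjOn f (range (T / gcd T s)) := fun m hm n hn hmn =>
    ((add_mul_modEq_iff_modEq_div_gcd hT (ModEq.refl (a + n * s))).1 hmn).eq_of_lt_of_lt
      (mem_range.1 hm) (mem_range.1 hn)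
  have hmem_P {x : ℕ} (hx : x ≡ a [MOD gcd T s]) : x % T ∈ P :=
    mem_filter.2 ⟨mem_range.2 (mod_lt _ hT), ((mod_modEq x T).of_dvd (gcd_dvd_left T s)).trans hx⟩
  have hsub : (range (T / gcd T s)).image f ⊆ P := by
    rintro _ hx
    obtain ⟨n, -, rfl⟩ := mem_image.1 hx
    exact hmem_P (modEq_gcd_of_add_mul_modEq (ModEq.refl (a + n * s))).symm
  have hcard : #P ≤ #((range (T / gcd T s)).image f) := by
    rw [Finset.card_image_of_injOn hinj, card_range,
      card_filter_range_modEq_of_dvd (gcd_pos_of_pos_left s hT) (gcd_dvd_left T s)]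
  obtain ⟨n, -, hn⟩ := mem_image.1 (eq_of_subset_of_card_le hsub hcard ▸ hmem_P h.symm)
  exact ⟨n, hn⟩

theorem card_filter_range_add_mul_mod_eq (hr : r < T) (N : ℕ) :
    #{n ∈ range (N * (T / gcd T s)) | (a + n * s) % T = r} =
      if a ≡ r [MOD gcd T s] then N else 0 := by
  have hT : 0 < T := by omega
  have hrT : r % T = r := mod_eq_of_lt hr
  split_ifs with ha
  · obtain ⟨n₀, h₀⟩ := exists_add_mul_modEq_of_modEq_gcd hT ha
    have ht := div_gcd_pos_of_pos_left s hT
    calc #{n ∈ range (N * (T / gcd T s)) | (a + n * s) % T = r}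
        = #{n ∈ range (N * (T / gcd T s)) | n ≡ n₀ [MOD T / gcd T s]} := by
          refine congrArg card (filter_congr fun n _ => ?_)
          rw [← add_mul_modEq_iff_modEq_div_gcd hT h₀, ModEq, hrT]
      _ = N := by
          rw [card_filter_range_modEq_of_dvd ht (dvd_mul_left _ _), Nat.mul_div_cancel _ ht]
  · rw [Finset.card_eq_zero, filter_eq_empty_iff]
    exact fun n _ hn => ha (modEq_gcd_of_add_mul_modEq (hn.trans hrT.symm))

end Nat

theorem stmt6_general (T s : ℕ) (hgcd : Nat.gcd s T = 2) (a : ℕ) :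
    ∀ N r : ℕ, r < T →
      ((Finset.range (N * (T / 2))).filter (fun n => (a + n * s) % T = r)).card =
        if r % 2 = a % 2 then N else 0 := by
  intro N r hr
  have hcount := Nat.card_filter_range_add_mul_mod_eq (s := s) (a := a) hr N
  rw [Nat.gcd_comm, hgcd] at hcount
  exact hcount.trans (if_congr (by rw [Nat.ModEq, eq_comm]) rfl rfl)

/-- For an even positive period `T` and an even positive step `s` with `gcd(s, T) = 2`,
the progression `a + n·s` equidistributes over exactly the residues modulo `T` in the
parity class of `a`: among the first `N·(T/2)` indices, each residue `r < T` with
`r % 2 = a % 2` is hit exactly `N` times and all other residues are never hit. -/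
theorem stmt6 (T s : ℕ) (hT : 0 < T) (hTe : Even T) (hs : 0 < s) (hse : Even s)
    (hgcd : Nat.gcd s T = 2) (a : ℕ) :
    ∀ N r : ℕ, r < T →
      ((Finset.range (N * (T / 2))).filter (fun n => (a + n * s) % T = r)).card =
        if r % 2 = a % 2 then N else 0 :=
  stmt6_general T s hgcd a
end

section
/- Let T be an even positive natural number, s an even positive natural number with gcd(s, T) = 2, a a natural number, and g : ℕ → ℝ a T-periodic function. Then the Cesàro averages (1/N)·Σ_{n=0}^{N−1} g(a + n·s) converge, as N → ∞, to (2/T)·Σ_{t < T, t % 2 = a % 2} g(t). In particular the limit depends on a only through the parity of a, and does not depend on s. -/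
/-!
Write `d = gcd(s, T)`. Since `g` is `T`-periodic and `(T / d) * s` is a multiple of `T`, the
sequence `n ↦ g (a + n s)` is `(T / d)`-periodic, so its Cesàro means converge to its average over
one period (the centred partial sums are again periodic, hence bounded). Over such a period the
residues `(a + n s) % T` are pairwise distinct (cancel `s / d`, which is coprime to `T / d`) and
all lie in the class of `a` modulo `d`, which has exactly `T / d` elements below `T`; hence they
run through that class exactly once.
-/

open Filter Finset Function Topology

lemma sum_range_div_gcd_add_mul_mod {β : Type*} [AddCommMonoid β] (f : ℕ → β) {T : ℕ}
    (hT : 0 < T) (s a : ℕ) :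
    ∑ n ∈ range (T / Nat.gcd s T), f ((a + n * s) % T)
      = ∑ t ∈ range T with t % Nat.gcd s T = a % Nat.gcd s T, f t := by
  set d := Nat.gcd s T
  have hinj : Set.InjOn (fun n => (a + n * s) % T) (range (T / d)) := by
    intro x hx y hy hxy
    have hmod : x * s ≡ y * s [MOD T] := Nat.ModEq.add_left_cancel' a hxy
    have hmod' := Nat.ModEq.cancel_right_div_gcd hT hmod
    rw [Nat.gcd_comm] at hmod'
    exact hmod'.eq_of_lt_of_lt (mem_range.1 hx) (mem_range.1 hy)
  have hmaps : ∀ n ∈ range (T / d), (a + n * s) % T ∈ {t ∈ range T | t % d = a % d} := by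
    intro n _
    have hstep : a + n * s ≡ a [MOD d] := by
      simpa using (Nat.ModEq.refl a).add
        (Nat.modEq_zero_iff_dvd.2 (dvd_mul_of_dvd_right (Nat.gcd_dvd_left s T) n))
    rw [mem_filter, mem_range, Nat.mod_mod_of_dvd _ (Nat.gcd_dvd_right s T)]
    exact ⟨Nat.mod_lt _ hT, hstep⟩
  have hcard : #{t ∈ range T | t % d = a % d} = T / d := by
    have := Nat.count_modEq_card T (Nat.gcd_pos_of_pos_right s hT) a
    rw [Nat.mod_eq_zero_of_dvd (Nat.gcd_dvd_right s T), if_neg (Nat.not_lt_zero _), add_zero,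
      Nat.count_eq_card_filter_range] at this
    exact this
  have himage :
      (range (T / d)).image (fun n => (a + n * s) % T) = {t ∈ range T | t % d = a % d} :=
    eq_of_subset_of_card_le (fun t ht => by
      obtain ⟨n, hn, rfl⟩ := mem_image.1 ht
      exact hmaps n hn)
      (by rw [hcard, card_image_of_injOn hinj, card_range])
  rw [← himage, sum_image hinj]

section Cesaro

variable {E : Type*} [NormedAddCommGroup E] [NormedSpace ℝ E]

lemma Function.Periodic.periodic_sum_range_sub_mean {M : ℕ} {h : ℕ → E} (hM : 0 < M)
    (hp : Periodic h M) :
    Periodic (fun N => ∑ n ∈ range N, (h n - (1 / (M : ℝ)) • ∑ k ∈ range M, h k)) M := by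
  intro N
  have hM' : (M : ℝ) ≠ 0 := by exact_mod_cast hM.ne'
  have hperiod : ∑ n ∈ range M, (h n - (1 / (M : ℝ)) • ∑ k ∈ range M, h k) = 0 := by
    rw [sum_sub_distrib, sum_const, card_range, ← Nat.cast_smul_eq_nsmul ℝ, smul_smul,
      mul_one_div_cancel hM', one_smul, sub_self]
  simp only [add_comm N M, sum_range_add, hperiod, zero_add]
  exact sum_congr rfl fun n _ => by rw [add_comm, hp]

lemma Function.Periodic.tendsto_cesaro {M : ℕ} {h : ℕ → E} (hM : 0 < M) (hp : Periodic h M) :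
    Tendsto (fun N : ℕ => (1 / (N : ℝ)) • ∑ n ∈ range N, h n) atTop
      (𝓝 ((1 / (M : ℝ)) • ∑ n ∈ range M, h n)) := by
  set c := (1 / (M : ℝ)) • ∑ n ∈ range M, h n
  set D := fun N => ∑ n ∈ range N, (h n - c)
  have hD : Periodic D M := hp.periodic_sum_range_sub_mean hM
  have hbdd : IsBoundedUnder (· ≤ ·) atTop (norm ∘ D) :=
    isBoundedUnder_of ⟨∑ k ∈ range M, ‖D k‖, fun N => by
      rw [comp_apply, ← hD.map_mod_nat N]
      exact single_le_sum (f := fun k => ‖D k‖) (fun _ _ => norm_nonneg _)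
        (mem_range.2 (N.mod_lt hM))⟩
  have hsmall : Tendsto (fun N : ℕ => (1 / (N : ℝ)) • D N) atTop (𝓝 0) :=
    (tendsto_const_div_atTop_nhds_zero_nat 1).zero_smul_isBoundedUnder_le hbdd
  have hsplit : ∀ᶠ N : ℕ in atTop,
      c + (1 / (N : ℝ)) • D N = (1 / (N : ℝ)) • ∑ n ∈ range N, h n := by
    filter_upwards [eventually_ne_atTop 0] with N hN
    have hN : (N : ℝ) ≠ 0 := by exact_mod_cast hN
    simp only [D, sum_sub_distrib, sum_const, card_range, ← Nat.cast_smul_eq_nsmul ℝ, smul_sub,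
      smul_smul, one_div_mul_cancel hN, one_smul, add_sub_cancel]
  simpa using (tendsto_const_nhds.add hsmall).congr' hsplit

lemma Function.Periodic.tendsto_cesaro_comp_add_mul {g : ℕ → E} {T : ℕ} (hT : 0 < T)
    (hg : Periodic g T) (s a : ℕ) :
    Tendsto (fun N : ℕ => (1 / (N : ℝ)) • ∑ n ∈ range N, g (a + n * s)) atTop
      (𝓝 ((1 / ((T / Nat.gcd s T : ℕ) : ℝ)) •
        ∑ t ∈ range T with t % Nat.gcd s T = a % Nat.gcd s T, g t)) := by
  have hperiod : T / Nat.gcd s T * s = s / Nat.gcd s T * T := by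
    rw [Nat.div_mul_right_comm (Nat.gcd_dvd_right s T), Nat.mul_div_assoc _ (Nat.gcd_dvd_left s T),
      mul_comm]
  have hp : Periodic (fun n => g (a + n * s)) (T / Nat.gcd s T) := fun n => by
    simpa [add_mul, hperiod, add_assoc] using hg.nat_mul (s / Nat.gcd s T) (a + n * s)
  rw [← sum_range_div_gcd_add_mul_mod g hT s a]
  simpa only [hg.map_mod_nat] using
    hp.tendsto_cesaro (Nat.div_pos (Nat.gcd_le_right _ hT) (Nat.gcd_pos_of_pos_right s hT))

end Cesaro

theorem stmt7_general (T s : ℕ) (hT : 0 < T)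
    (hgcd : Nat.gcd s T = 2) (a : ℕ)
    (g : ℕ → ℝ) (hg : ∀ n, g (n + T) = g n) :
    Filter.Tendsto
      (fun N : ℕ => (1 / (N : ℝ)) * ∑ n ∈ Finset.range N, g (a + n * s))
      Filter.atTop
      (nhds ((2 / (T : ℝ)) *
        ∑ t ∈ (Finset.range T).filter (fun t => t % 2 = a % 2), g t)) := by
  have hcast : ((T / 2 : ℕ) : ℝ) = T / 2 :=
    Nat.cast_div (hgcd ▸ Nat.gcd_dvd_right s T) two_ne_zero
  have h := Periodic.tendsto_cesaro_comp_add_mul hT hg s a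
  rw [hgcd, hcast, one_div_div] at h
  exact h

/-- For an even positive period `T`, an even positive step `s` with `gcd(s, T) = 2`, and a
`T`-periodic `g`, the Cesàro averages of `g` along `a + n·s` converge to the parity-class
average `(2/T)·Σ_{t < T, t % 2 = a % 2} g t`; in particular the limit depends on `a` only
through its parity and does not depend on `s`. -/
theorem stmt7 (T s : ℕ) (hT : 0 < T) (hTe : Even T) (hs : 0 < s) (hse : Even s)
    (hgcd : Nat.gcd s T = 2) (a : ℕ)
    (g : ℕ → ℝ) (hg : ∀ n, g (n + T) = g n) :
    Filter.Tendsto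
      (fun N : ℕ => (1 / (N : ℝ)) * ∑ n ∈ Finset.range N, g (a + n * s))
      Filter.atTop
      (nhds ((2 / (T : ℝ)) *
        ∑ t ∈ (Finset.range T).filter (fun t => t % 2 = a % 2), g t)) :=
  stmt7_general T s hT hgcd a g hg
end

section
/- Let M and N be positive natural numbers, let O : Fin M → Fin N → ℕ satisfy O(i)(n) ≤ 1 for all i, n, let c : Fin M → ℕ satisfy c(i) ≤ 1 for all i, and let y : Fin N → ℕ. Then Σ_{n : Fin N} ⌊(Σ_{i} (c(i)·O(i)(n) + (1 − c(i))·(1 − O(i)(n)))) / M⌋ · y(n) equals the sum of y(n) over those n ∈ Fin N such that O(i)(n) = c(i) for all i. -/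
/-!
For binary `a, b` the summand `a * b + (1 - a) * (1 - b)` is the indicator of `a = b`, so the
inner sum counts the stations at which column `n` agrees with `c`. That count is at most `M`, with
equality exactly when the column matches `c`, so its floor quotient by `M` is the indicator of
the match.
-/

open Finset

theorem Nat.mul_add_tsub_mul_tsub_eq_ite {a b : ℕ} (ha : a ≤ 1) (hb : b ≤ 1) :
    a * b + (1 - a) * (1 - b) = if b = a then 1 else 0 := by
  interval_cases a <;> interval_cases b <;> simp

theorem Finset.card_filter_div_card {α : Type*} {s : Finset α} (hs : s.Nonempty)
    (p : α → Prop) [DecidablePred p] :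
    #(s.filter p) / #s = if ∀ x ∈ s, p x then 1 else 0 := by
  split_ifs with h
  · rw [filter_true_of_mem h, Nat.div_self hs.card_pos]
  · push Not at h
    exact Nat.div_eq_of_lt (card_lt_card (filter_ssubset.mpr h))

theorem stmt10_general (M N : ℕ) (hM : 0 < M) (O : Fin M → Fin N → ℕ)
    (hO : ∀ i n, O i n ≤ 1) (c : Fin M → ℕ) (hc : ∀ i, c i ≤ 1) (y : Fin N → ℕ) :
    ∑ n : Fin N, ((∑ i, (c i * O i n + (1 - c i) * (1 - O i n))) / M) * y n =
      ∑ n ∈ Finset.univ.filter (fun n => ∀ i, O i n = c i), y n := by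
  have : Nonempty (Fin M) := Fin.pos_iff_nonempty.mp hM
  rw [sum_filter]
  refine sum_congr rfl fun n _ => ?_
  have matches_count : ∑ i, (c i * O i n + (1 - c i) * (1 - O i n))
      = #(univ.filter fun i => O i n = c i) := by
    simp only [Nat.mul_add_tsub_mul_tsub_eq_ite (hc _) (hO _ n), sum_boole, Nat.cast_id]
  have all_match := card_filter_div_card (univ_nonempty (α := Fin M)) (fun i => O i n = c i)
  rw [card_univ, Fintype.card_fin] at all_match
  simp only [matches_count, all_match, mem_univ, true_implies, ite_mul, one_mul, zero_mul]

/-- Correctness of the BbCPT numerator: for binary observation columns `O` and a binary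
condition vector `c`, the closed-form matrix expression
`Σₙ ⌊(Σᵢ (cᵢ·Oᵢₙ + (1 − cᵢ)·(1 − Oᵢₙ))) / M⌋ · yₙ` sums `y` exactly over the columns
matching the conditioning event `c`. Subtraction and division are truncated. -/
theorem stmt10 (M N : ℕ) (hM : 0 < M) (hN : 0 < N) (O : Fin M → Fin N → ℕ)
    (hO : ∀ i n, O i n ≤ 1) (c : Fin M → ℕ) (hc : ∀ i, c i ≤ 1) (y : Fin N → ℕ) :
    ∑ n : Fin N, ((∑ i, (c i * O i n + (1 - c i) * (1 - O i n))) / M) * y n =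
      ∑ n ∈ Finset.univ.filter (fun n => ∀ i, O i n = c i), y n :=
  stmt10_general M N hM O hO c hc y
end

section
/- Let Ω be a probability space and let X, Y, Z, W be measurable random variables on Ω taking values in finite measurable spaces (with measurable singletons). If the pair ⟨X, Y⟩ is conditionally independent of W given Z, then the conditional mutual information satisfies I[X : Y | ⟨Z, W⟩] = I[X : Y | Z]. -/
/-!
Conditioning on `Z` is conditioning on the finitely many fibers `{Z = v}`, on each of which
conditional expectations given `Z` are constant. Integrating over a fiber, conditional
independence of `T` and `W` given `Z` therefore gives
`P(Z = v, W = w, T = t) P(Z = v) = P(Z = v, W = w) P(Z = v, T = t)`, i.e. the law of `T` on the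
fiber `{Z = v, W = w}` is its law on `{Z = v}`. Hence `H[T | Z, W] = H[T | Z]` for each of
`T = X`, `T = Y` and `T = ⟨X, Y⟩`.
-/

open MeasureTheory ProbabilityTheory

/-- Shannon entropy of a finitely-valued random variable `X` under the measure `μ`. -/
noncomputable def entropy {Ω S : Type*} [MeasurableSpace Ω] [Fintype S]
    (μ : Measure Ω) (X : Ω → S) : ℝ :=
  ∑ s : S, Real.negMulLog (μ (X ⁻¹' {s})).toReal

/-- Conditional Shannon entropy `H[Y | X] = Σ_s P(X = s) · H(Y | X = s)` for
finitely-valued random variables. -/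
noncomputable def condEntropy {Ω S U : Type*} [MeasurableSpace Ω] [Fintype S] [Fintype U]
    (μ : Measure Ω) (Y : Ω → U) (X : Ω → S) : ℝ :=
  ∑ s : S, (μ (X ⁻¹' {s})).toReal *
    ∑ u : U, Real.negMulLog
      ((μ (X ⁻¹' {s} ∩ Y ⁻¹' {u})).toReal / (μ (X ⁻¹' {s})).toReal)

/-- Conditional mutual information `I[X : Y | Z] = H[X | Z] + H[Y | Z] − H[⟨X, Y⟩ | Z]`
for finitely-valued random variables. -/
noncomputable def condMutualInfo {Ω S U V : Type*} [MeasurableSpace Ω]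
    [Fintype S] [Fintype U] [Fintype V]
    (μ : Measure Ω) (X : Ω → S) (Y : Ω → U) (Z : Ω → V) : ℝ :=
  condEntropy μ X Z + condEntropy μ Y Z - condEntropy μ (fun ω => (X ω, Y ω)) Z

section Fibers

variable {Ω V : Type*} {mΩ : MeasurableSpace Ω} [MeasurableSpace V] [MeasurableSingletonClass V]
  {μ : Measure Ω} {Z : Ω → V}

lemma setIntegral_preimage_singleton_of_stronglyMeasurable_comap {g : Ω → ℝ}
    (hg : StronglyMeasurable[MeasurableSpace.comap Z inferInstance] g) (hZ : Measurable Z)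
    {v : V} {ω₀ : Ω} (hω₀ : Z ω₀ = v) :
    ∫ ω in Z ⁻¹' {v}, g ω ∂μ = μ.real (Z ⁻¹' {v}) * g ω₀ := by
  rw [setIntegral_congr_fun (hZ (measurableSet_singleton v))
    fun ω hω => hg.factorsThrough (hω.trans hω₀.symm), setIntegral_const, smul_eq_mul]

lemma measureReal_inter_eq_setIntegral_condExp [IsFiniteMeasure μ] {m : MeasurableSpace Ω}
    (hm : m ≤ mΩ) {s A : Set Ω} (hs : MeasurableSet[m] s) (hA : MeasurableSet[mΩ] A) :
    μ.real (s ∩ A) = ∫ ω in s, (μ⟦A | m⟧) ω ∂μ := by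
  rw [setIntegral_condExp hm ((integrable_const (1 : ℝ)).indicator hA) hs,
    integral_indicator_const (1 : ℝ) hA, smul_eq_mul, mul_one, measureReal_restrict_apply hA,
    Set.inter_comm]

lemma CondIndepSet.measureReal_preimage_singleton_inter_mul [StandardBorelSpace Ω]
    [IsFiniteMeasure μ] (hZ : Measurable Z) {A B : Set Ω} (hA : MeasurableSet A)
    (hB : MeasurableSet B)
    (h : CondIndepSet (MeasurableSpace.comap Z inferInstance) hZ.comap_le A B μ) (v : V) :
    μ.real (Z ⁻¹' {v} ∩ A ∩ B) * μ.real (Z ⁻¹' {v})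
      = μ.real (Z ⁻¹' {v} ∩ A) * μ.real (Z ⁻¹' {v} ∩ B) := by
  rcases (Z ⁻¹' {v}).eq_empty_or_nonempty with hF | ⟨ω₀, hω₀⟩
  · simp [hF]
  have hF : MeasurableSet[MeasurableSpace.comap Z inferInstance] (Z ⁻¹' {v}) :=
    ⟨{v}, measurableSet_singleton v, rfl⟩
  have hFiber {g : Ω → ℝ} (hg : StronglyMeasurable[MeasurableSpace.comap Z inferInstance] g) :=
    setIntegral_preimage_singleton_of_stronglyMeasurable_comap (μ := μ) hg hZ hω₀
  have hProd := (condIndepSet_iff _ _ A B hA hB μ).mp h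
  rw [Set.inter_assoc, measureReal_inter_eq_setIntegral_condExp hZ.comap_le hF (hA.inter hB),
    setIntegral_congr_ae (hZ.comap_le _ hF) (hProd.mono fun ω hω _ => hω),
    measureReal_inter_eq_setIntegral_condExp hZ.comap_le hF hA,
    measureReal_inter_eq_setIntegral_condExp hZ.comap_le hF hB,
    hFiber (stronglyMeasurable_condExp.mul stronglyMeasurable_condExp),
    hFiber stronglyMeasurable_condExp, hFiber stronglyMeasurable_condExp, Pi.mul_apply]
  ring

end Fibers

section Entropy

variable {Ω T V W : Type*} [MeasurableSpace Ω] [Fintype T] [Fintype V]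
  [MeasurableSpace W] [Fintype W] [MeasurableSingletonClass W] {μ : Measure Ω} [IsFiniteMeasure μ]

lemma sum_measureReal_inter_preimage_singleton {ζ : Ω → W} (hζ : Measurable ζ) (s : Set Ω) :
    ∑ w, μ.real (s ∩ ζ ⁻¹' {w}) = μ.real s := by
  have := sum_measureReal_preimage_singleton (μ := μ.restrict s) Finset.univ
    fun w _ => hζ (measurableSet_singleton w)
  simpa [measureReal_restrict_apply (hζ (measurableSet_singleton _)), Set.inter_comm] using this

lemma condEntropy_prod_eq_of_measureReal_inter_mul {τ : Ω → T} {Z : Ω → V} {ζ : Ω → W}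
    (hζ : Measurable ζ)
    (hfact : ∀ v w t, μ.real (Z ⁻¹' {v} ∩ ζ ⁻¹' {w} ∩ τ ⁻¹' {t}) * μ.real (Z ⁻¹' {v})
      = μ.real (Z ⁻¹' {v} ∩ ζ ⁻¹' {w}) * μ.real (Z ⁻¹' {v} ∩ τ ⁻¹' {t})) :
    condEntropy μ τ (fun ω => (Z ω, ζ ω)) = condEntropy μ τ Z := by
  unfold condEntropy
  simp only [← measureReal_def, Fintype.sum_prod_type, ← Set.singleton_prod_singleton,
    Set.mk_preimage_prod]
  refine Finset.sum_congr rfl fun v _ => ?_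
  have hratio : ∀ w t, μ.real (Z ⁻¹' {v} ∩ ζ ⁻¹' {w}) ≠ 0 →
      μ.real (Z ⁻¹' {v} ∩ ζ ⁻¹' {w} ∩ τ ⁻¹' {t}) / μ.real (Z ⁻¹' {v} ∩ ζ ⁻¹' {w})
        = μ.real (Z ⁻¹' {v} ∩ τ ⁻¹' {t}) / μ.real (Z ⁻¹' {v}) := fun w t hw => by
    have hv : μ.real (Z ⁻¹' {v}) ≠ 0 := fun h0 =>
      hw (measureReal_mono_null Set.inter_subset_left h0)
    rw [div_eq_div_iff hw hv, hfact, mul_comm]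
  calc ∑ w, μ.real (Z ⁻¹' {v} ∩ ζ ⁻¹' {w}) * ∑ t, Real.negMulLog
          (μ.real (Z ⁻¹' {v} ∩ ζ ⁻¹' {w} ∩ τ ⁻¹' {t}) / μ.real (Z ⁻¹' {v} ∩ ζ ⁻¹' {w}))
      = ∑ w, μ.real (Z ⁻¹' {v} ∩ ζ ⁻¹' {w}) * ∑ t, Real.negMulLog
          (μ.real (Z ⁻¹' {v} ∩ τ ⁻¹' {t}) / μ.real (Z ⁻¹' {v})) := by
        refine Finset.sum_congr rfl fun w _ => ?_
        rcases eq_or_ne (μ.real (Z ⁻¹' {v} ∩ ζ ⁻¹' {w})) 0 with hw | hw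
        · rw [hw, zero_mul, zero_mul]
        · simp only [hratio w _ hw]
    _ = μ.real (Z ⁻¹' {v}) * ∑ t, Real.negMulLog
          (μ.real (Z ⁻¹' {v} ∩ τ ⁻¹' {t}) / μ.real (Z ⁻¹' {v})) := by
        rw [← Finset.sum_mul, sum_measureReal_inter_preimage_singleton hζ]

lemma condEntropy_prod_eq_of_condIndepFun [StandardBorelSpace Ω] [MeasurableSpace T]
    [MeasurableSingletonClass T] [MeasurableSpace V] [MeasurableSingletonClass V]
    {τ : Ω → T} {Z : Ω → V} {ζ : Ω → W} (hτ : Measurable τ) (hZ : Measurable Z)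
    (hζ : Measurable ζ)
    (h : CondIndepFun (MeasurableSpace.comap Z inferInstance) hZ.comap_le τ ζ μ) :
    condEntropy μ τ (fun ω => (Z ω, ζ ω)) = condEntropy μ τ Z :=
  condEntropy_prod_eq_of_measureReal_inter_mul hζ fun v w t =>
    CondIndepSet.measureReal_preimage_singleton_inter_mul hZ (hζ (measurableSet_singleton w))
      (hτ (measurableSet_singleton t))
      ((condIndepFun_iff_condIndepSet_preimage hζ hτ).mp h.symm {w} {t}
        (measurableSet_singleton w) (measurableSet_singleton t)) v

end Entropy

/-- If the pair `⟨X, Y⟩` is conditionally independent of `W` given `Z`, then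
`I[X : Y | ⟨Z, W⟩] = I[X : Y | Z]`. -/
theorem stmt13 {Ω S U V W : Type*} [mΩ : MeasurableSpace Ω] [StandardBorelSpace Ω]
    [MeasurableSpace S] [Fintype S] [MeasurableSingletonClass S]
    [MeasurableSpace U] [Fintype U] [MeasurableSingletonClass U]
    [MeasurableSpace V] [Fintype V] [MeasurableSingletonClass V]
    [MeasurableSpace W] [Fintype W] [MeasurableSingletonClass W]
    (μ : Measure Ω) [IsProbabilityMeasure μ]
    (X : Ω → S) (Y : Ω → U) (Z : Ω → V) (W' : Ω → W)
    (hX : Measurable X) (hY : Measurable Y) (hZ : Measurable Z) (hW : Measurable W')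
    (h : CondIndepFun (MeasurableSpace.comap Z inferInstance)
      hZ.comap_le (fun ω => (X ω, Y ω)) W' μ) :
    condMutualInfo μ X Y (fun ω => (Z ω, W' ω)) = condMutualInfo μ X Y Z := by
  unfold condMutualInfo
  rw [condEntropy_prod_eq_of_condIndepFun hX hZ hW (h.comp measurable_fst measurable_id),
    condEntropy_prod_eq_of_condIndepFun hY hZ hW (h.comp measurable_snd measurable_id),
    condEntropy_prod_eq_of_condIndepFun (hX.prodMk hY) hZ hW h]
end
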